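/- Fix r ≥ 2. Let ω(S) and ω(T) be the weight sequences (non-decreasing vectors of internal-node weights, where the weight of an internal node with the all-ones initial leaf weights equals its number of descendant leaves) of two r-furcating tree shapes S and T on n = w(r−1)+1 leaves, w ≥ 1. If ω(T) is weakly supermajorized by ω(S), i.e. ω(T) ≺^w ω(S), and ω(T) ≠ ω(S), then ∑_{v ∈ V^0(S)} log(m(v) − 1) < ∑_{v ∈ V^0(T)} log(m(v) − 1), so T has strictly fewer labeled histories than S. -/

import Mathlib

/-- Rooted trees with unlabeled leaves: a tree is a leaf or a list of subtrees. -/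
inductive RTree : Type
  | leaf : RTree
  | node : List RTree → RTree

namespace RTree

/-- Number of leaves of a rooted tree. -/
def leaves : RTree → ℕ
  | leaf => 1
  | node ts => (ts.attach.map (fun ⟨t, _⟩ => leaves t)).sum
decreasing_by
  have := List.sizeOf_lt_of_mem ‹_›
  simp only [RTree.node.sizeOf_spec]
  omega

/-- Multiset of values `m(v)` (number of descendant leaves) over internal nodes `v`. -/
def weights : RTree → Multiset ℕ
  | leaf => 0
  | node ts => leaves (node ts) ::ₘ (ts.attach.map (fun ⟨t, _⟩ => weights t)).sum
decreasing_by
  have := List.sizeOf_lt_of_mem ‹_›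
  simp only [RTree.node.sizeOf_spec]
  omega

/-- A tree is (strictly) r-furcating if every internal node has exactly r children. -/
inductive IsRFurcating (r : ℕ) : RTree → Prop
  | leaf : IsRFurcating r .leaf
  | node (ts : List RTree) (hlen : ts.length = r)
      (hts : ∀ t ∈ ts, IsRFurcating r t) : IsRFurcating r (.node ts)

/-- The number of labeled histories of (any labeling of) an r-furcating tree,
via the recursion `N(T) = multinomial(w−1; w₁,…,w_r) ∏ N(Tᵢ)` where
`wᵢ = (|Tᵢ|−1)/(r−1)` and `w − 1 = ∑ wᵢ`. -/
def NLH (r : ℕ) : RTree → ℕ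
  | leaf => 1
  | node ts =>
      (Nat.factorial ((ts.map (fun t => (leaves t - 1) / (r - 1))).sum) /
        (ts.map (fun t => Nat.factorial ((leaves t - 1) / (r - 1)))).prod) *
      (ts.attach.map (fun ⟨t, _⟩ => NLH r t)).prod
decreasing_by
  have := List.sizeOf_lt_of_mem ‹_›
  simp only [RTree.node.sizeOf_spec]
  omega

/-- Shape equality of rooted trees: same unlabeled topology, i.e., children
lists agree up to permutation and recursive shape equality. -/
inductive SameShape : RTree → RTree → Prop
  | leaf : SameShape .leaf .leaf
  | node {l₁ l₂ l₃ : List RTree} :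
      List.Forall₂ SameShape l₁ l₂ → l₂.Perm l₃ → SameShape (.node l₁) (.node l₃)

end RTree

section Helpers

lemma sum_map_succ {α} (L : List α) (f g : α → ℕ) (h : ∀ t ∈ L, f t = g t + 1) :
    (L.map f).sum = (L.map g).sum + L.length := by
  induction L with
  | nil => simp
  | cons x xs ih =>
    simp only [List.map_cons, List.sum_cons, List.length_cons,
      h x List.mem_cons_self, ih (fun t ht => h t (List.mem_cons_of_mem x ht))]
    ring

lemma prod_factorial_dvd (L : List ℕ) : (L.map Nat.factorial).prod ∣ (L.sum).factorial := by
  induction L with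
  | nil => simp
  | cons x xs ih =>
    simp only [List.map_cons, List.prod_cons, List.sum_cons]
    calc x.factorial * (xs.map Nat.factorial).prod ∣ x.factorial * xs.sum.factorial :=
          mul_dvd_mul_left _ ih
      _ ∣ (x + xs.sum).factorial := Nat.factorial_mul_factorial_dvd_factorial_add _ _

lemma map_listSum {α β} (L : List (Multiset α)) (g : α → β) :
    L.sum.map g = (L.map (Multiset.map g)).sum := by
  induction L with
  | nil => simp
  | cons x xs ih => simp [ih]

lemma prod_listSum (L : List (Multiset ℕ)) :
    L.sum.prod = (L.map Multiset.prod).prod := by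
  induction L with
  | nil => simp
  | cons x xs ih => simp [ih]

lemma mem_listSum {α} {L : List (Multiset α)} {m : α} :
    m ∈ L.sum ↔ ∃ s ∈ L, m ∈ s := by
  induction L with
  | nil => simp
  | cons x xs ih => simp [ih]

lemma card_listSum {α} (L : List (Multiset α)) :
    Multiset.card L.sum = (L.map (fun s => Multiset.card s)).sum := by
  induction L with
  | nil => simp
  | cons x xs ih => simp [ih]


open RTree

lemma leaves_node (ts : List RTree) : leaves (.node ts) = (ts.map leaves).sum := by
  rw [leaves, List.attach_map_val]

lemma weights_node (ts : List RTree) :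
    weights (.node ts) = leaves (.node ts) ::ₘ (ts.map weights).sum := by
  rw [weights, List.attach_map_val]

lemma NLH_node (r : ℕ) (ts : List RTree) :
    NLH r (.node ts) =
      (Nat.factorial ((ts.map (fun t => (leaves t - 1) / (r - 1))).sum) /
        (ts.map (fun t => Nat.factorial ((leaves t - 1) / (r - 1)))).prod) *
      (ts.map (NLH r)).prod := by
  rw [NLH, List.attach_map_val]

end Helpers
open RTree

lemma tree_facts {r : ℕ} (hr : 2 ≤ r) {t : RTree} (h : IsRFurcating r t) :
    1 ≤ leaves t ∧ (r-1) ∣ (leaves t - 1) ∧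
    Multiset.card (weights t) * (r-1) = leaves t - 1 ∧
    ∀ m ∈ weights t, r ≤ m ∧ (r-1) ∣ (m-1) := by
  induction h with
  | leaf => simp [leaves, weights]
  | node ts hlen hts ih =>
    have h1 : (ts.map leaves).sum = (ts.map (fun t => leaves t - 1)).sum + r := by
      rw [sum_map_succ ts leaves (fun t => leaves t - 1)
        (fun t ht => by have := (ih t ht).1; show leaves t = leaves t - 1 + 1; omega), hlen]
    have hln : leaves (.node ts) = (ts.map leaves).sum := leaves_node ts
    have hdvds : (r-1) ∣ (ts.map (fun t => leaves t - 1)).sum := by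
      apply List.dvd_sum
      intro x hx
      obtain ⟨t, ht, rfl⟩ := List.mem_map.1 hx
      exact (ih t ht).2.1
    have hn1 : 1 ≤ leaves (.node ts) := by omega
    have hd1 : (r-1) ∣ (leaves (.node ts) - 1) := by
      have : leaves (.node ts) - 1 = (ts.map (fun t => leaves t - 1)).sum + (r - 1) := by omega
      rw [this]
      exact Nat.dvd_add hdvds dvd_rfl
    refine ⟨hn1, hd1, ?_, ?_⟩
    · have hc : (ts.map (fun t => Multiset.card (weights t))).sum * (r-1)
          = (ts.map (fun t => leaves t - 1)).sum := by
        rw [← List.sum_map_mul_right]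
        apply congrArg
        apply List.map_congr_left
        intro t ht
        exact (ih t ht).2.2.1
      have hcard : Multiset.card (weights (.node ts))
          = (ts.map (fun t => Multiset.card (weights t))).sum + 1 := by
        rw [weights_node, Multiset.card_cons, card_listSum, List.map_map]
        rfl
      rw [hcard, add_mul, one_mul, hc]
      omega
    · intro m hm
      rw [weights_node, Multiset.mem_cons] at hm
      rcases hm with rfl | hm
      · exact ⟨by omega, hd1⟩
      · rw [mem_listSum] at hm
        obtain ⟨s, hs, hms⟩ := hm
        obtain ⟨t, ht, rfl⟩ := List.mem_map.1 hs
        exact (ih t ht).2.2.2 m hms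

lemma NLH_closed {r : ℕ} (hr : 2 ≤ r) {t : RTree} (h : IsRFurcating r t) :
    NLH r t * ((weights t).map (fun m => (m-1)/(r-1))).prod
      = Nat.factorial ((leaves t - 1)/(r-1)) := by
  induction h with
  | leaf => simp [NLH, weights, leaves]
  | node ts hlen hts ih =>
    have hfacts := fun t (ht : t ∈ ts) => tree_facts hr (hts t ht)
    have h1 : (ts.map leaves).sum = (ts.map (fun t => leaves t - 1)).sum + r := by
      rw [sum_map_succ ts leaves (fun t => leaves t - 1)
        (fun t ht => by have := (hfacts t ht).1; show leaves t = leaves t - 1 + 1; omega), hlen]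
    have hln : leaves (.node ts) = (ts.map leaves).sum := leaves_node ts
    have hndvd : (r-1) ∣ leaves (.node ts) - 1 :=
      (tree_facts hr (IsRFurcating.node ts hlen hts)).2.1
    have hWmul : (leaves (.node ts) - 1)/(r-1) * (r-1) = leaves (.node ts) - 1 :=
      Nat.div_mul_cancel hndvd
    have hW1 : 1 ≤ (leaves (.node ts) - 1)/(r-1) := by
      rcases Nat.eq_zero_or_pos ((leaves (.node ts) - 1)/(r-1)) with h0 | h0
      · rw [h0, zero_mul] at hWmul; omega
      · omega
    have hsum : (ts.map (fun t => (leaves t - 1)/(r-1))).sum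
        = (leaves (.node ts) - 1)/(r-1) - 1 := by
      apply Nat.eq_of_mul_eq_mul_right (show 0 < r-1 by omega)
      have hs : (ts.map (fun t => (leaves t - 1)/(r-1))).sum * (r-1)
          = (ts.map (fun t => leaves t - 1)).sum := by
        rw [← List.sum_map_mul_right]
        apply congrArg
        apply List.map_congr_left
        intro t ht
        exact Nat.div_mul_cancel (hfacts t ht).2.1
      rw [hs, Nat.sub_mul, hWmul, one_mul]
      omega
    have hQdvd : (ts.map (fun t => Nat.factorial ((leaves t - 1)/(r-1)))).prod
        ∣ Nat.factorial ((ts.map (fun t => (leaves t - 1)/(r-1))).sum) := by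
      have h2 := prod_factorial_dvd (ts.map (fun t => (leaves t - 1)/(r-1)))
      rwa [List.map_map] at h2
    rw [NLH_node, weights_node, Multiset.map_cons, Multiset.prod_cons,
      map_listSum, List.map_map, prod_listSum, List.map_map]
    have hprods : (ts.map (NLH r)).prod *
        (ts.map (fun t => ((weights t).map (fun m => (m-1)/(r-1))).prod)).prod
        = (ts.map (fun t => Nat.factorial ((leaves t - 1)/(r-1)))).prod := by
      rw [← List.prod_map_mul]
      apply congrArg
      apply List.map_congr_left
      intro t ht
      exact ih t ht
    simp only [Function.comp_def]
    rw [show ∀ a b c d : ℕ, a*b*(c*d) = c*(a*(b*d)) from fun a b c d => by ring]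
    rw [hprods, Nat.div_mul_cancel hQdvd, hsum]
    exact Nat.mul_factorial_pred (by omega)

lemma abel_nonneg (w : ℕ) (c d : ℕ → ℝ)
    (hmono : ∀ i j, i ≤ j → j < w → c j ≤ c i)
    (hD : ∀ k, k ≤ w → 0 ≤ ∑ i ∈ Finset.range k, d i) :
    ∀ m : ℝ, 0 ≤ m → (∀ i, i < w → m ≤ c i) →
    m * (∑ i ∈ Finset.range w, d i) ≤ ∑ i ∈ Finset.range w, c i * d i := by
  induction w with
  | zero => simp
  | succ w ih =>
    intro m hm hmc
    have hcw : 0 ≤ c w := le_trans hm (hmc w (Nat.lt_succ_self w))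
    have hge : c w * (∑ i ∈ Finset.range w, d i) ≤ ∑ i ∈ Finset.range w, c i * d i :=
      ih (fun i j hij hj => hmono i j hij (by omega)) (fun k hk => hD k (by omega))
        (c w) hcw (fun i hi => hmono i w (Nat.le_of_lt hi) (Nat.lt_succ_self w))
    have hDw : 0 ≤ ∑ i ∈ Finset.range (w+1), d i := hD (w+1) le_rfl
    have h2 : m * (∑ i ∈ Finset.range (w+1), d i) ≤ c w * (∑ i ∈ Finset.range (w+1), d i) :=
      mul_le_mul_of_nonneg_right (hmc w (Nat.lt_succ_self w)) hDw
    rw [Finset.sum_range_succ (fun i => c i * d i) w, Finset.sum_range_succ d w]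
    rw [Finset.sum_range_succ d w] at h2
    have h3 : c w * (∑ i ∈ Finset.range w, d i + d w)
        = c w * (∑ i ∈ Finset.range w, d i) + c w * d w := by ring
    rw [h3] at h2
    linarith

lemma log_tangent_le {x y : ℝ} (hx : 2 ≤ x) (hy : 2 ≤ y) :
    (y - x)/(y-1) ≤ Real.log (y-1) - Real.log (x-1) := by
  have hx1 : (0:ℝ) < x - 1 := by linarith
  have hy1 : (0:ℝ) < y - 1 := by linarith
  have hu : (0:ℝ) < (x-1)/(y-1) := div_pos hx1 hy1
  have h := Real.log_le_sub_one_of_pos hu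
  rw [Real.log_div (ne_of_gt hx1) (ne_of_gt hy1)] at h
  have : (x-1)/(y-1) - 1 = (x - y)/(y-1) := by field_simp; ring
  rw [this] at h
  have h2 : (x - y)/(y-1) = -((y - x)/(y-1)) := by ring
  linarith [h, h2 ▸ h]

lemma log_tangent_lt {x y : ℝ} (hx : 2 ≤ x) (hy : 2 ≤ y) (hxy : x ≠ y) :
    (y - x)/(y-1) < Real.log (y-1) - Real.log (x-1) := by
  have hx1 : (0:ℝ) < x - 1 := by linarith
  have hy1 : (0:ℝ) < y - 1 := by linarith
  have hu : (0:ℝ) < (x-1)/(y-1) := div_pos hx1 hy1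
  have hne : (x-1)/(y-1) ≠ 1 := by
    intro hc
    apply hxy
    field_simp at hc
    linarith
  have h := Real.log_lt_sub_one_of_pos hu hne
  rw [Real.log_div (ne_of_gt hx1) (ne_of_gt hy1)] at h
  have heq : (x-1)/(y-1) - 1 = (x - y)/(y-1) := by field_simp; ring
  rw [heq] at h
  have h2 : (x - y)/(y-1) = -((y - x)/(y-1)) := by ring
  linarith

lemma list_sum_map_getD {α : Type*} (L : List α) (d : α) (f : α → ℝ) :
    (L.map f).sum = ∑ i ∈ Finset.range L.length, f (L.getD i d) := by
  induction L with
  | nil => simp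
  | cons x xs ih =>
    rw [List.map_cons, List.sum_cons, List.length_cons, Finset.sum_range_succ']
    simp only [List.getD_cons_succ, List.getD_cons_zero]
    rw [ih]
    ring

lemma take_sum_getD (L : List ℕ) (d : ℕ) : ∀ k, k ≤ L.length →
    (L.take k).sum = ∑ i ∈ Finset.range k, L.getD i d := by
  induction L with
  | nil => intro k hk; simp at hk; simp [hk]
  | cons x xs ih =>
    intro k hk
    cases k with
    | zero => simp
    | succ k =>
      rw [List.take_succ_cons, List.sum_cons, Finset.sum_range_succ']
      simp only [List.getD_cons_succ, List.getD_cons_zero]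
      rw [ih k (by simpa using hk)]
      ring

lemma sorted_log_lt (w : ℕ) (A B : List ℕ)
    (hAl : A.length = w) (hBl : B.length = w)
    (hA2 : ∀ m ∈ A, 2 ≤ m) (hB2 : ∀ m ∈ B, 2 ≤ m)
    (hBs : List.Pairwise (· ≤ ·) B)
    (hpre : ∀ k, k ≤ w → (A.take k).sum ≤ (B.take k).sum)
    (hne : A ≠ B) :
    (A.map (fun m : ℕ => Real.log ((m:ℝ)-1))).sum < (B.map (fun m : ℕ => Real.log ((m:ℝ)-1))).sum := by
  set a : ℕ → ℝ := fun i => ((A.getD i 2 : ℕ) : ℝ) with ha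
  set b : ℕ → ℝ := fun i => ((B.getD i 2 : ℕ) : ℝ) with hb
  have ha2 : ∀ i, 2 ≤ a i := by
    intro i
    by_cases hi : i < A.length
    · have hmem : A.getD i 2 ∈ A := by
        rw [List.getD_eq_getElem _ _ hi]; exact List.getElem_mem _
      simp only [ha]
      exact_mod_cast hA2 _ hmem
    · simp only [ha]; rw [List.getD_eq_default _ _ (le_of_not_gt hi)]; norm_num
  have hb2 : ∀ i, 2 ≤ b i := by
    intro i
    by_cases hi : i < B.length
    · have hmem : B.getD i 2 ∈ B := by
        rw [List.getD_eq_getElem _ _ hi]; exact List.getElem_mem _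
      simp only [hb]
      exact_mod_cast hB2 _ hmem
    · simp only [hb]; rw [List.getD_eq_default _ _ (le_of_not_gt hi)]; norm_num
  have hbmono : ∀ i j, i ≤ j → j < w → b i ≤ b j := by
    intro i j hij hj
    rcases eq_or_lt_of_le hij with rfl | hlt
    · exact le_rfl
    · have hi' : i < B.length := by omega
      have hj' : j < B.length := by omega
      have hrel := hBs.rel_get_of_lt (a := ⟨i, hi'⟩) (b := ⟨j, hj'⟩) (by exact hlt)
      simp only [List.get_eq_getElem] at hrel
      simp only [hb]
      rw [List.getD_eq_getElem _ _ hi', List.getD_eq_getElem _ _ hj']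
      exact_mod_cast hrel
  have hdiff : ∃ j, j < w ∧ A.getD j 2 ≠ B.getD j 2 := by
    by_contra hc
    push_neg at hc
    apply hne
    apply List.ext_getElem (by omega)
    intro i h1 h2
    have := hc i (by omega)
    rwa [List.getD_eq_getElem _ _ h1, List.getD_eq_getElem _ _ h2] at this
  obtain ⟨j, hj, hjne⟩ := hdiff
  have key_le : ∀ i ∈ Finset.range w, (b i - a i)/(b i - 1)
      ≤ Real.log (b i - 1) - Real.log (a i - 1) :=
    fun i _ => log_tangent_le (ha2 i) (hb2 i)
  have key_lt : (b j - a j)/(b j - 1) < Real.log (b j - 1) - Real.log (a j - 1) := by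
    apply log_tangent_lt (ha2 j) (hb2 j)
    intro hc
    apply hjne
    simp only [ha, hb] at hc
    exact_mod_cast hc
  have hsum1 : ∑ i ∈ Finset.range w, (b i - a i)/(b i - 1)
      < ∑ i ∈ Finset.range w, (Real.log (b i - 1) - Real.log (a i - 1)) :=
    Finset.sum_lt_sum key_le ⟨j, Finset.mem_range.2 hj, key_lt⟩
  have hD : ∀ k, k ≤ w → 0 ≤ ∑ i ∈ Finset.range k, (b i - a i) := by
    intro k hk
    rw [Finset.sum_sub_distrib]
    have hA' : ((A.take k).sum : ℝ) = ∑ i ∈ Finset.range k, a i := by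
      rw [take_sum_getD A 2 k (by omega)]; push_cast; rfl
    have hB' : ((B.take k).sum : ℝ) = ∑ i ∈ Finset.range k, b i := by
      rw [take_sum_getD B 2 k (by omega)]; push_cast; rfl
    rw [← hA', ← hB']
    have := hpre k hk
    have : ((A.take k).sum : ℝ) ≤ ((B.take k).sum : ℝ) := by exact_mod_cast this
    linarith
  have habel : 0 ≤ ∑ i ∈ Finset.range w, (b i - a i)/(b i - 1) := by
    have h0 := abel_nonneg w (fun i => 1/(b i - 1)) (fun i => b i - a i)
      (fun i j hij hjw => by
        have h1 : (1:ℝ) ≤ b i - 1 := by have := hb2 i; linarith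
        have h2 : b i ≤ b j := hbmono i j hij hjw
        apply one_div_le_one_div_of_le <;> linarith)
      hD 0 le_rfl
      (fun i hi => by show (0:ℝ) ≤ 1/(b i - 1); have := hb2 i; exact one_div_nonneg.2 (by linarith))
    rw [zero_mul] at h0
    calc (0:ℝ) ≤ ∑ i ∈ Finset.range w, 1/(b i - 1) * (b i - a i) := h0
      _ = ∑ i ∈ Finset.range w, (b i - a i)/(b i - 1) := by
          apply Finset.sum_congr rfl
          intro i _
          rw [one_div_mul_eq_div]
  have hfinal : 0 < ∑ i ∈ Finset.range w, (Real.log (b i - 1) - Real.log (a i - 1)) :=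
    lt_of_le_of_lt habel hsum1
  rw [Finset.sum_sub_distrib] at hfinal
  rw [list_sum_map_getD A 2 (fun m : ℕ => Real.log ((m:ℝ)-1)),
    list_sum_map_getD B 2 (fun m : ℕ => Real.log ((m:ℝ)-1)), hAl, hBl]
  simp only [ha, hb] at hfinal
  linarith

lemma prod_div_pow (r : ℕ) (hr : 2 ≤ r) (s : Multiset ℕ) (h : ∀ m ∈ s, (r-1) ∣ (m-1)) :
    (s.map (fun m => (m-1)/(r-1))).prod * (r-1)^(Multiset.card s)
      = (s.map (fun m => m-1)).prod := by
  induction s using Multiset.induction with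
  | empty => simp
  | cons x s ih =>
    have hx : (r-1) ∣ (x-1) := h x (Multiset.mem_cons_self x s)
    have ih' := ih (fun m hm => h m (Multiset.mem_cons_of_mem hm))
    simp only [Multiset.map_cons, Multiset.prod_cons, Multiset.card_cons, pow_succ]
    calc (x-1)/(r-1) * (s.map (fun m => (m-1)/(r-1))).prod * ((r-1)^(Multiset.card s) * (r-1))
        = ((x-1)/(r-1) * (r-1)) *
          ((s.map (fun m => (m-1)/(r-1))).prod * (r-1)^(Multiset.card s)) := by ring
      _ = (x-1) * (s.map (fun m => m-1)).prod := by rw [Nat.div_mul_cancel hx, ih']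

lemma log_prod_multiset (s : Multiset ℕ) (h : ∀ m ∈ s, 2 ≤ m) :
    Real.log (((s.map (fun m => m-1)).prod : ℕ) : ℝ)
      = (s.map (fun m : ℕ => Real.log ((m:ℝ)-1))).sum := by
  induction s using Multiset.induction with
  | empty => simp
  | cons x s ih =>
    have hx : 2 ≤ x := h x (Multiset.mem_cons_self x s)
    have ih' := ih (fun m hm => h m (Multiset.mem_cons_of_mem hm))
    have hprodpos : 0 < (s.map (fun m => m-1)).prod := by
      apply Multiset.prod_pos
      intro a ha
      obtain ⟨m, hm, rfl⟩ := Multiset.mem_map.1 ha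
      have := h m (Multiset.mem_cons_of_mem hm)
      omega
    have h1 : (((x-1:ℕ)):ℝ) ≠ 0 := Nat.cast_ne_zero.2 (by omega)
    have h2 : ((((s.map (fun m => m-1)).prod : ℕ)):ℝ) ≠ 0 :=
      Nat.cast_ne_zero.2 (by omega)
    simp only [Multiset.map_cons, Multiset.prod_cons, Multiset.sum_cons]
    rw [Nat.cast_mul, Real.log_mul h1 h2, ih']
    congr 1
    rw [Nat.cast_sub (by omega : 1 ≤ x), Nat.cast_one]

lemma map_log_coe (s : Multiset ℕ) :
    (Multiset.map (fun m : ℝ => Real.log (m - 1)) (do let a ← s; pure ((a:ℕ):ℝ))).sum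
      = (s.map (fun m : ℕ => Real.log ((m:ℝ) - 1))).sum := by
  simp [Multiset.bind_singleton]

open RTree in
/-- If the weight sequence of `T` (internal-node leaf counts in non-decreasing
order) is weakly supermajorized by that of `S` (`ω(T) ≺^w ω(S)`) and the two
weight sequences differ, then
`∑_{v∈V⁰(S)} log(m(v)−1) < ∑_{v∈V⁰(T)} log(m(v)−1)`, and hence `T` has
strictly fewer labeled histories than `S`. -/
theorem weight_seq_supermajorize_lt (r : ℕ) (hr : 2 ≤ r) (w : ℕ) (hw : 1 ≤ w)
    (n : ℕ) (hn : n = w * (r - 1) + 1) (S T : RTree)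
    (hS : IsRFurcating r S) (hT : IsRFurcating r T)
    (hSn : leaves S = n) (hTn : leaves T = n)
    (hsuper : ∀ k : ℕ, 1 ≤ k → k ≤ w →
      ((((weights S).sort (· ≤ ·)).take k).sum : ℕ) ≤
        ((((weights T).sort (· ≤ ·)).take k).sum : ℕ))
    (hne : (weights T).sort (· ≤ ·) ≠ (weights S).sort (· ≤ ·)) :
    ((weights S).map (fun m => Real.log ((m : ℝ) - 1))).sum <
      ((weights T).map (fun m => Real.log ((m : ℝ) - 1))).sum ∧
    NLH r T < NLH r S := by
  have hr1 : 0 < r - 1 := by omega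
  have hfS := tree_facts hr hS
  have hfT := tree_facts hr hT
  have hcardS : Multiset.card (weights S) = w := by
    have h1 := hfS.2.2.1
    rw [hSn, hn] at h1
    exact Nat.eq_of_mul_eq_mul_right hr1 (by omega)
  have hcardT : Multiset.card (weights T) = w := by
    have h1 := hfT.2.2.1
    rw [hTn, hn] at h1
    exact Nat.eq_of_mul_eq_mul_right hr1 (by omega)
  have hAl : ((weights S).sort (· ≤ ·)).length = w := by
    rw [Multiset.length_sort]; exact hcardS
  have hBl : ((weights T).sort (· ≤ ·)).length = w := by
    rw [Multiset.length_sort]; exact hcardT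
  have hA2 : ∀ m ∈ (weights S).sort (· ≤ ·), 2 ≤ m := fun m hm =>
    le_trans hr ((hfS.2.2.2 m ((Multiset.mem_sort _).1 hm)).1)
  have hB2 : ∀ m ∈ (weights T).sort (· ≤ ·), 2 ≤ m := fun m hm =>
    le_trans hr ((hfT.2.2.2 m ((Multiset.mem_sort _).1 hm)).1)
  have hpre : ∀ k, k ≤ w → (((weights S).sort (· ≤ ·)).take k).sum
      ≤ (((weights T).sort (· ≤ ·)).take k).sum := by
    intro k hk
    rcases Nat.eq_zero_or_pos k with rfl | hk1
    · simp
    · exact hsuper k hk1 hk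
  have hlog := sorted_log_lt w ((weights S).sort (· ≤ ·)) ((weights T).sort (· ≤ ·))
    hAl hBl hA2 hB2 (Multiset.pairwise_sort (s := weights T) (r := (· ≤ ·))) hpre (Ne.symm hne)
  have goal1 : ((weights S).map (fun m : ℕ => Real.log ((m : ℝ) - 1))).sum <
      ((weights T).map (fun m : ℕ => Real.log ((m : ℝ) - 1))).sum := by
    conv_lhs => rw [← Multiset.sort_eq (s := weights S) (r := (· ≤ ·))]
    conv_rhs => rw [← Multiset.sort_eq (s := weights T) (r := (· ≤ ·))]
    rw [Multiset.map_coe, Multiset.map_coe, Multiset.sum_coe, Multiset.sum_coe]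
    exact hlog
  refine ⟨by rw [map_log_coe, map_log_coe]; exact goal1, ?_⟩
  have hwS : (leaves S - 1)/(r-1) = w := by
    rw [hSn, hn, Nat.add_sub_cancel, Nat.mul_div_cancel _ hr1]
  have hwT : (leaves T - 1)/(r-1) = w := by
    rw [hTn, hn, Nat.add_sub_cancel, Nat.mul_div_cancel _ hr1]
  have hclosedS := NLH_closed hr hS
  rw [hwS] at hclosedS
  have hclosedT := NLH_closed hr hT
  rw [hwT] at hclosedT
  have hPSpow := prod_div_pow r hr (weights S) (fun m hm => (hfS.2.2.2 m hm).2)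
  rw [hcardS] at hPSpow
  have hPTpow := prod_div_pow r hr (weights T) (fun m hm => (hfT.2.2.2 m hm).2)
  rw [hcardT] at hPTpow
  have hm2S : ∀ m ∈ weights S, 2 ≤ m := fun m hm => le_trans hr (hfS.2.2.2 m hm).1
  have hm2T : ∀ m ∈ weights T, 2 ≤ m := fun m hm => le_trans hr (hfT.2.2.2 m hm).1
  have hπSpos : 0 < ((weights S).map (fun m => m-1)).prod := by
    apply Multiset.prod_pos
    intro a ha
    obtain ⟨m, hm, rfl⟩ := Multiset.mem_map.1 ha
    have := hm2S m hm
    omega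
  have hπTpos : 0 < ((weights T).map (fun m => m-1)).prod := by
    apply Multiset.prod_pos
    intro a ha
    obtain ⟨m, hm, rfl⟩ := Multiset.mem_map.1 ha
    have := hm2T m hm
    omega
  have hlogπ : Real.log ((((weights S).map (fun m => m-1)).prod : ℕ) : ℝ)
      < Real.log ((((weights T).map (fun m => m-1)).prod : ℕ) : ℝ) := by
    rw [log_prod_multiset _ hm2S, log_prod_multiset _ hm2T]
    exact goal1
  have hπlt : ((weights S).map (fun m => m-1)).prod
      < ((weights T).map (fun m => m-1)).prod := by
    have h2 := (Real.log_lt_log_iff (by exact_mod_cast hπSpos) (by exact_mod_cast hπTpos)).1 hlogπ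
    exact_mod_cast h2
  have hPlt : ((weights S).map (fun m => (m-1)/(r-1))).prod
      < ((weights T).map (fun m => (m-1)/(r-1))).prod := by
    apply Nat.lt_of_mul_lt_mul_right (a := (r-1)^w)
    rw [hPSpow, hPTpow]
    exact hπlt
  have hNSpos : 0 < NLH r S := by
    rcases Nat.eq_zero_or_pos (NLH r S) with h0 | h0
    · rw [h0, zero_mul] at hclosedS
      exact absurd hclosedS.symm (Nat.factorial_ne_zero w)
    · exact h0
  have hmain : NLH r T * ((weights T).map (fun m => (m-1)/(r-1))).prod
      < NLH r S * ((weights T).map (fun m => (m-1)/(r-1))).prod := by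
    rw [hclosedT, ← hclosedS]
    exact mul_lt_mul_of_pos_left hPlt hNSpos
  exact Nat.lt_of_mul_lt_mul_right hmain
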